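/- There exists an absolute constant C > 0 with the following property. For all integers N ≥ 2 and M ≥ 2, every nonempty subset X of {1, 2, …, 10^M}, and every real Δ ≥ 1 satisfying M·|X|·Δ² ≤ π(N)·log M, the number of primes p ≤ N for which the inequality | #{x mod p : x ∈ X} − |X| | ≤ C·|X|/Δ FAILS is at most C·π(N)/Δ. -/

import Mathlib

/-!
Write `T = π(N)/Δ`. At most `T` primes are `≤ T`. For a prime `p > T`, the number of elements of
`X` lost when reducing mod `p` is at most the number of pairs `x < y` in `X` with `p ∣ y - x`,
and a difference `0 < y - x ≤ 10^M` has at most `M log 10 / log T` prime factors exceeding `T`.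
Summing over the bad primes `p > T`, each of which loses more than `C|X|/Δ` elements, bounds
their number by `O(M |X| Δ / log T)`. The hypothesis `M|X|Δ² ≤ π(N) log M` gives
`M ≤ T log M`, hence `T ≥ √M` and `log T ≥ (log M)/2`, so this is `O(π(N)/Δ)`.
-/

open Finset Real

section Collisions

variable {α β : Type*} [LinearOrder α] [DecidableEq β]

def collisionPairs (X : Finset α) (f : α → β) : Finset (α × α) :=
  {q ∈ X ×ˢ X | q.1 < q.2 ∧ f q.1 = f q.2}

/-- The elements of `X` that are least in their fibre inject into `X.image f`; every other element
is the second coordinate of a collision pair. -/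
theorem card_le_card_image_add_card_collisionPairs (X : Finset α) (f : α → β) :
    #X ≤ #(X.image f) + #(collisionPairs X f) := by
  set least := {x ∈ X | ∀ y ∈ X, f y = f x → x ≤ y}
  have hinj : Set.InjOn f least := fun a ha b hb hab =>
    le_antisymm ((mem_filter.mp ha).2 b (mem_filter.mp hb).1 hab.symm)
      ((mem_filter.mp hb).2 a (mem_filter.mp ha).1 hab)
  have hrest : {x ∈ X | ¬ ∀ y ∈ X, f y = f x → x ≤ y} ⊆ (collisionPairs X f).image Prod.snd := by
    intro x hx
    simp only [mem_filter, not_forall, not_le] at hx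
    obtain ⟨hx, y, hy, hfy, hyx⟩ := hx
    exact mem_image.mpr ⟨(y, x), mem_filter.mpr ⟨mem_product.mpr ⟨hy, hx⟩, hyx, hfy⟩, rfl⟩
  calc #X = #least + #{x ∈ X | ¬ ∀ y ∈ X, f y = f x → x ≤ y} :=
        (card_filter_add_card_filter_not _).symm
    _ ≤ #(X.image f) + #(collisionPairs X f) := by
      gcongr
      · rw [← card_image_of_injOn hinj]
        exact card_le_card (image_subset_image (filter_subset _ _))
      · exact (card_le_card hrest).trans card_image_le

end Collisions

theorem card_primeFactors_filter_lt_mul_log_le {n : ℕ} (hn : n ≠ 0) {T : ℝ} (hT : 0 < T) :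
    #{p ∈ n.primeFactors | T < (p : ℕ)} * log T ≤ log n := by
  set F := {p ∈ n.primeFactors | T < (p : ℕ)}
  have hpow : T ^ #F ≤ n :=
    calc T ^ #F = ∏ _p ∈ F, T := (prod_const T).symm
      _ ≤ ∏ p ∈ F, (p : ℝ) := prod_le_prod (fun _ _ => hT.le) fun p hp => (mem_filter.mp hp).2.le
      _ = ((∏ p ∈ F, p : ℕ) : ℝ) := by push_cast; rfl
      _ ≤ n := by
        exact_mod_cast Nat.le_of_dvd (Nat.pos_of_ne_zero hn)
          ((prod_dvd_prod_of_subset _ _ _ (filter_subset _ _)).trans (Nat.prod_primeFactors_dvd n))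
  rw [← log_pow]
  exact log_le_log (pow_pos hT _) hpow

theorem sum_card_collisionPairs_mod_mul_log_le {X P : Finset ℕ} {L : ℕ} {T : ℝ} (hT : 1 ≤ T)
    (hX : ∀ x ∈ X, x ≤ L) (hP : ∀ p ∈ P, p.Prime ∧ T < p) :
    (∑ p ∈ P, (#(collisionPairs X (· % p)) : ℝ)) * log T ≤ #X ^ 2 * log L := by
  have hpair : ∀ q ∈ X ×ˢ X, (#{p ∈ P | q.1 < q.2 ∧ q.1 % p = q.2 % p} : ℝ) * log T ≤ log L := by
    rintro ⟨x, y⟩ hq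
    by_cases hxy : x < y
    · have hsub : {p ∈ P | x < y ∧ x % p = y % p} ⊆ {p ∈ (y - x).primeFactors | T < (p : ℕ)} := by
        intro p hp
        obtain ⟨hpP, -, hmod⟩ := mem_filter.mp hp
        exact mem_filter.mpr ⟨Nat.mem_primeFactors.mpr
          ⟨(hP p hpP).1, (Nat.modEq_iff_dvd' hxy.le).mp hmod, by omega⟩, (hP p hpP).2⟩
      have hyL : y ≤ L := hX y (mem_product.mp hq).2
      calc (#{p ∈ P | x < y ∧ x % p = y % p} : ℝ) * log T
          ≤ #{p ∈ (y - x).primeFactors | T < (p : ℕ)} * log T := by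
            gcongr
            exact log_nonneg hT
        _ ≤ log (y - x : ℕ) := card_primeFactors_filter_lt_mul_log_le (by omega) (by linarith)
        _ ≤ log L :=
          log_le_log (by exact_mod_cast Nat.sub_pos_of_lt hxy) (by exact_mod_cast (by omega))
    · simp [hxy, log_natCast_nonneg]
  calc (∑ p ∈ P, (#(collisionPairs X (· % p)) : ℝ)) * log T
      = ∑ q ∈ X ×ˢ X, (#{p ∈ P | q.1 < q.2 ∧ q.1 % p = q.2 % p} : ℝ) * log T := by
        rw [← sum_mul, ← Nat.cast_sum, ← Nat.cast_sum]
        congr 2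
        exact sum_card_bipartiteAbove_eq_sum_card_bipartiteBelow
          (fun p (q : ℕ × ℕ) => q.1 < q.2 ∧ q.1 % p = q.2 % p)
    _ ≤ ∑ _q ∈ X ×ˢ X, log L := sum_le_sum hpair
    _ = #X ^ 2 * log L := by rw [sum_const, card_product, nsmul_eq_mul]; push_cast; ring

theorem card_mul_log_le_of_le_card_sub_card_image_mod {X P : Finset ℕ} {L : ℕ} {T δ : ℝ}
    (hT : 1 ≤ T) (hX : ∀ x ∈ X, x ≤ L) (hP : ∀ p ∈ P, p.Prime ∧ T < p)
    (hδ : ∀ p ∈ P, δ ≤ #X - #(X.image (· % p))) :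
    #P * δ * log T ≤ #X ^ 2 * log L := by
  have hsum : #P * δ ≤ ∑ p ∈ P, (#(collisionPairs X (· % p)) : ℝ) := by
    rw [← nsmul_eq_mul, ← sum_const]
    refine sum_le_sum fun p hp => (hδ p hp).trans ?_
    have := card_le_card_image_add_card_collisionPairs X (· % p)
    rw [sub_le_iff_le_add']
    exact_mod_cast this
  exact (mul_le_mul_of_nonneg_right hsum (log_nonneg hT)).trans
    (sum_card_collisionPairs_mod_mul_log_le hT hX hP)

theorem log_le_sqrt {x : ℝ} (hx : 0 ≤ x) : log x ≤ √x := by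
  set t := √√x
  have ht : log x = 4 * log t := by
    rw [log_sqrt (sqrt_nonneg x), log_sqrt hx]; ring
  have hts : t ^ 2 = √x := sq_sqrt (sqrt_nonneg x)
  rcases (sqrt_nonneg √x).eq_or_lt with h0 | hpos
  · rw [ht, show t = 0 from h0.symm, log_zero, mul_zero]; exact sqrt_nonneg x
  · nlinarith [log_le_sub_one_of_pos hpos, sq_nonneg (t - 2)]

theorem log_le_two_mul_log_of_le_mul_log {M T : ℝ} (hM : 1 < M) (h : M ≤ T * log M) :
    log M ≤ 2 * log T := by
  have hlogM : 0 < log M := log_pos hM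
  have hsqrt : √M ≤ T := by
    refine le_of_mul_le_mul_right ?_ hlogM
    calc √M * log M ≤ √M * √M := by gcongr; exact log_le_sqrt (by linarith)
      _ = M := mul_self_sqrt (by linarith)
      _ ≤ T * log M := h
  calc log M = 2 * log √M := by rw [log_sqrt (by linarith)]; ring
    _ ≤ 2 * log T := by gcongr

theorem card_filter_natCast_le_le {S : Finset ℕ} (hS : 0 ∉ S) {T : ℝ} (hT : 0 ≤ T) :
    (#{n ∈ S | (n : ℕ) ≤ T} : ℝ) ≤ T := by
  have hsub : {n ∈ S | (n : ℕ) ≤ T} ⊆ Icc 1 ⌊T⌋₊ := fun n hn => by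
    obtain ⟨hnS, hnT⟩ := mem_filter.mp hn
    exact mem_Icc.mpr ⟨Nat.one_le_iff_ne_zero.mpr (ne_of_mem_of_not_mem hnS hS), Nat.le_floor hnT⟩
  calc (#{n ∈ S | (n : ℕ) ≤ T} : ℝ) ≤ #(Icc 1 ⌊T⌋₊) := by exact_mod_cast card_le_card hsub
    _ = ⌊T⌋₊ := by simp
    _ ≤ T := Nat.floor_le hT

theorem card_le_of_forall_le_card_sub_card_image_mod {X P : Finset ℕ} {M : ℕ} {Δ πN : ℝ}
    (hM : 2 ≤ M) (hΔ : 1 ≤ Δ) (hX : ∀ x ∈ X, x ≤ 10 ^ M) (hXne : X.Nonempty)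
    (hsize : M * #X * Δ ^ 2 ≤ πN * log M) (hP : ∀ p ∈ P, p.Prime ∧ πN / Δ < p)
    (hδ : ∀ p ∈ P, 6 * #X / Δ ≤ #X - #(X.image (· % p))) :
    #P ≤ 3 * πN / Δ := by
  set K : ℝ := (#X : ℝ)
  set T := πN / Δ
  have hK : 1 ≤ K := Nat.one_le_cast.mpr hXne.card_pos
  have hK0 : 0 < K := by linarith
  have hΔ0 : 0 < Δ := by linarith
  have hM1 : (1 : ℝ) < M := by exact_mod_cast hM
  have hlogM : 0 < log M := log_pos hM1
  have hMT : (M : ℝ) ≤ T * log M := by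
    rw [div_mul_eq_mul_div, le_div_iff₀ hΔ0]
    nlinarith [mul_le_mul_of_nonneg_left (by nlinarith : Δ ≤ K * Δ ^ 2) (by linarith : (0 : ℝ) ≤ M)]
  have hlogT : log M ≤ 2 * log T := log_le_two_mul_log_of_le_mul_log hM1 hMT
  have hT : 1 ≤ T := by
    have hT0 : 0 < T := pos_of_mul_pos_left (by linarith) hlogM.le
    exact ((log_pos_iff hT0.le).mp (by linarith)).le
  have hcount := card_mul_log_le_of_le_card_sub_card_image_mod hT hX hP hδ
  rw [Nat.cast_pow, log_pow, Nat.cast_ofNat] at hcount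
  have hlog10 : log 10 ≤ 9 := by linarith [log_le_sub_one_of_pos (by norm_num : (0 : ℝ) < 10)]
  have hkey : #P * Δ * (3 * log M) ≤ 3 * πN * (3 * log M) :=
    calc #P * Δ * (3 * log M) ≤ #P * Δ * (6 * log T) :=
        mul_le_mul_of_nonneg_left (by linarith) (by positivity)
      _ = #P * (6 * K / Δ) * log T * (Δ ^ 2 / K) := by field_simp
      _ ≤ K ^ 2 * (M * log 10) * (Δ ^ 2 / K) := by gcongr
      _ = M * K * Δ ^ 2 * log 10 := by field_simp
      _ ≤ M * K * Δ ^ 2 * 9 := by gcongr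
      _ ≤ πN * log M * 9 := by gcongr
      _ = 3 * πN * (3 * log M) := by ring
  rw [le_div_iff₀ hΔ0]
  exact le_of_mul_le_mul_right hkey (by linarith)

/-- **Corollary 1 (asymptotic value set for sparse sets).**
There is an absolute constant `C > 0` such that for all integers `N ≥ 2`, `M ≥ 2`,
every nonempty `X ⊆ {1, …, 10^M}` and every real `Δ ≥ 1` with
`M·|X|·Δ² ≤ π(N)·log M`, the number of primes `p ≤ N` for which
`| #{x mod p : x ∈ X} − |X| | ≤ C·|X|/Δ` fails is at most `C·π(N)/Δ`. -/
theorem stmt_2 :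
    ∃ C : ℝ, 0 < C ∧
      ∀ N M : ℕ, 2 ≤ N → 2 ≤ M →
        ∀ X : Finset ℕ, X ⊆ Finset.Icc 1 (10 ^ M) → X.Nonempty →
          ∀ Δ : ℝ, 1 ≤ Δ →
            (M : ℝ) * (X.card : ℝ) * Δ ^ 2 ≤ (N.primeCounting : ℝ) * Real.log M →
            ({p : ℕ | p ≤ N ∧ p.Prime ∧
                ¬ (|((X.image (fun x => x % p)).card : ℝ) - (X.card : ℝ)| ≤
                    C * (X.card : ℝ) / Δ)}.ncard : ℝ)
              ≤ C * (N.primeCounting : ℝ) / Δ := by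
  refine ⟨6, by norm_num, fun N M _ hM X hX hXne Δ hΔ hsize => ?_⟩
  set S := {p ∈ Iic N | p.Prime ∧ ¬ |(#(X.image (· % p)) : ℝ) - #X| ≤ 6 * #X / Δ}
  have hS : {p : ℕ | p ≤ N ∧ p.Prime ∧ ¬ |(#(X.image (· % p)) : ℝ) - #X| ≤ 6 * #X / Δ} = S := by
    ext p; simp [S]
  set T := (N.primeCounting : ℝ) / Δ
  rw [hS, Set.ncard_coe_finset,
    ← card_filter_add_card_filter_not (s := S) (fun p : ℕ => (p : ℝ) ≤ T)]
  have hsmall := card_filter_natCast_le_le (S := S) (by simp [S, Nat.not_prime_zero])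
    (div_nonneg (Nat.cast_nonneg _) (by linarith) : 0 ≤ T)
  have hlarge : (#{p ∈ S | ¬ (p : ℕ) ≤ T} : ℝ) ≤ 3 * N.primeCounting / Δ := by
    refine card_le_of_forall_le_card_sub_card_image_mod hM hΔ (fun x hx => (mem_Icc.mp (hX hx)).2)
      hXne hsize (fun p hp => ?_) (fun p hp => ?_) <;> simp only [S, mem_filter, not_le] at hp
    · exact ⟨hp.1.2.1, hp.2⟩
    · have hbad := hp.1.2.2
      have himage : (#(X.image (· % p)) : ℝ) ≤ #X := Nat.cast_le.mpr card_image_le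
      rw [abs_of_nonpos (by linarith)] at hbad
      linarith
  push_cast
  rw [mul_div_assoc] at hlarge ⊢
  linarith
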